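/- Let p be a prime and let n_1, …, n_s be arbitrary positive integers such that for all integers c_1, …, c_s with 0 ≤ c_i ≤ n_i for each i and not all c_i zero, one has c_1·n_1 + c_2·n_2 + ⋯ + c_s·n_s ≢ 0 (mod p). Then p > n_1 + n_2 + ⋯ + n_s. -/
import Mathlib


/-- Let `p` be a prime and `n 0, …, n (s-1)` positive integers such that
`c₁n₁ + ⋯ + cₛnₛ ≢ 0 (mod p)` for all integers `0 ≤ cᵢ ≤ nᵢ` not all zero.  Then
`p > n₁ + n₂ + ⋯ + nₛ`. -/
theorem sum_lt_prime_of_zero_sum_free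
    (p : ℕ) (hp : p.Prime) (s : ℕ) (hs : 0 < s)
    (n : Fin s → ℕ) (hn : ∀ i, 0 < n i)
    (h : ∀ c : Fin s → ℕ, (∀ i, c i ≤ n i) → (∃ i, c i ≠ 0) →
      ¬ (p ∣ ∑ i, c i * n i)) :
    ∑ i, n i < p := by
  by_contra hlt
  push_neg at hlt
  set m : ℕ → ℕ := fun j => if hj : j < s then n ⟨j, hj⟩ else 0 with hm
  set N : ℕ → ℕ := fun j => ∑ t ∈ Finset.range j, m t with hN
  have hmn : ∀ i : Fin s, m (i : ℕ) = n i := fun i => by simp [hm, i.isLt]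
  have hT : N s = ∑ i, n i := by
    simp only [hN]
    rw [← Fin.sum_univ_eq_sum_range]
    exact Finset.sum_congr rfl fun i _ => hmn i
  have key : ∀ L k, ∑ j ∈ Finset.range L, min (m j) (k - N j) = min k (N L) := by
    intro L k
    induction L with
    | zero => simp [hN]
    | succ L ih =>
      rw [Finset.sum_range_succ, ih]
      have : N (L + 1) = N L + m L := Finset.sum_range_succ m L
      omega
  set c : ℕ → Fin s → ℕ := fun k i => min (n i) (k - N i) with hc
  have hsum : ∀ k, k ≤ ∑ i, n i → ∑ i, c k i = k := by
    intro k hk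
    have h1 : ∑ i, c k i = ∑ j ∈ Finset.range s, min (m j) (k - N j) := by
      rw [← Fin.sum_univ_eq_sum_range]
      exact Finset.sum_congr rfl fun i _ => by rw [hmn i]
    rw [h1, key s k, hT]
    omega
  have hmono : ∀ a b, a ≤ b → ∀ i, c a i ≤ c b i := by
    intro a b hab i
    exact min_le_min le_rfl (Nat.sub_le_sub_right hab _)
  have core : ∀ a b : ℕ, a < b → b ≤ p →
      (∑ i, c a i * n i) % p = (∑ i, c b i * n i) % p → False := by
    intro a b hab hbp heq
    set d : Fin s → ℕ := fun i => c b i - c a i with hd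
    have hdle : ∀ i, d i ≤ n i := fun i => le_trans (Nat.sub_le _ _) (min_le_left _ _)
    have hsumd : ∑ i, d i * n i + ∑ i, c a i * n i = ∑ i, c b i * n i := by
      rw [← Finset.sum_add_distrib]
      refine Finset.sum_congr rfl fun i _ => ?_
      have := hmono a b (le_of_lt hab) i
      rw [← Nat.add_mul, Nat.sub_add_cancel this]
    have hle : ∑ i, c a i * n i ≤ ∑ i, c b i * n i := by omega
    have hdvd : p ∣ ∑ i, d i * n i := by
      have hmodeq : (∑ i, c a i * n i) ≡ (∑ i, c b i * n i) [MOD p] := heq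
      have hdvd' := (Nat.modEq_iff_dvd' hle).mp hmodeq
      have heq2 : ∑ i, c b i * n i - ∑ i, c a i * n i = ∑ i, d i * n i := by omega
      rwa [heq2] at hdvd'
    have hne : ∃ i, d i ≠ 0 := by
      by_contra hall
      push_neg at hall
      have hcc : ∀ i, c b i = c a i := by
        intro i
        have h1 := hmono a b (le_of_lt hab) i
        have h2 := hall i
        simp only [hd] at h2
        omega
      have hsa := hsum a (by omega)
      have hsb := hsum b (by omega)
      have hss : ∑ i, c b i = ∑ i, c a i :=
        Finset.sum_congr rfl fun i _ => hcc i
      omega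
    exact h d hdle hne hdvd
  have hpig : ∃ a b : Fin (p + 1), a ≠ b ∧
      (∑ i, c (a : ℕ) i * n i) % p = (∑ i, c (b : ℕ) i * n i) % p := by
    have hcard : Fintype.card (Fin p) < Fintype.card (Fin (p + 1)) := by simp
    obtain ⟨a, b, hne, heq⟩ := Fintype.exists_ne_map_eq_of_card_lt
      (fun k : Fin (p + 1) =>
        (⟨(∑ i, c (k : ℕ) i * n i) % p, Nat.mod_lt _ hp.pos⟩ : Fin p)) hcard
    exact ⟨a, b, hne, by simpa using congrArg Fin.val heq⟩
  obtain ⟨a, b, hne, heq⟩ := hpig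
  rcases hne.lt_or_gt with hlt' | hlt'
  · exact core a b hlt' (Nat.lt_succ_iff.mp b.isLt) heq
  · exact core b a hlt' (Nat.lt_succ_iff.mp a.isLt) heq.symm
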